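/- Let Ω be a set, I a nonempty index set, and f, g : I → Ω → ℝ two families of functions taking values in [0,1]. Fix points δ_1, …, δ_N ∈ Ω, and for any family h : I → Ω → ℝ define its empirical Rademacher complexity as R̂(h) = E_{(σ_1,…,σ_N)} [ sup_{i ∈ I} (1/N) ∑_{j=1}^N σ_j · h(i)(δ_j) ], where σ_1, …, σ_N are i.i.d. uniform on {−1, +1}. Then the family of pointwise maxima, i ↦ (ω ↦ max(f(i)(ω), g(i)(ω))), satisfies R̂(max(f,g)) ≤ R̂(f) + R̂(g). -/

import Mathlib

/-!
Writing `2 max(x, y) = (x + y) + |x - y|`, the Rademacher complexity of the pointwise maximum is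
bounded using subadditivity, invariance under `v ↦ -v`, and the contraction principle for the
`1`-Lipschitz map `|·|`. The contraction principle is proved by induction on the number of signs:
summing over the first sign with the others fixed, it reduces to the two-point inequality
`sup (b + φ t) + sup (b - φ t) ≤ sup (b + t) + sup (b - t)`, which holds because
`φ (t i) - φ (t i') ≤ |t i - t i'|`.
-/

/-- The empirical Rademacher complexity of the family of functions `h i : Ω → ℝ`, `i : I`,
on the fixed sample `δ 0, …, δ (N-1)`: the expectation, over i.i.d. uniform signs
`σ j ∈ {−1, +1}`, of `sup_{i ∈ I} (1/N) ∑ j σ j • h i (δ j)`. -/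
noncomputable def empRad {Ω I : Type*} (N : ℕ) (δ : Fin N → Ω) (h : I → Ω → ℝ) : ℝ :=
  (∑ σ : Fin N → Bool,
      ⨆ i : I, (1 / N : ℝ) * ∑ j : Fin N, (if σ j then (1 : ℝ) else -1) * h i (δ j)) /
    2 ^ N

open Finset

section Rademacher

variable {I : Type*} {N : ℕ}

noncomputable def signedSum (σ : Fin N → Bool) (x : Fin N → ℝ) : ℝ :=
  ∑ j, (if σ j then (1 : ℝ) else -1) * x j

noncomputable def rademacherSum (v : I → Fin N → ℝ) : ℝ :=
  ∑ σ : Fin N → Bool, ⨆ i, signedSum σ (v i)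

lemma abs_signedSum_le (σ : Fin N → Bool) {x : Fin N → ℝ} {C : ℝ} (hx : ∀ j, |x j| ≤ C) :
    |signedSum σ x| ≤ N * C :=
  calc |signedSum σ x| ≤ ∑ j, |(if σ j then (1 : ℝ) else -1) * x j| := abs_sum_le_sum_abs _ _
    _ = ∑ j, |x j| := sum_congr rfl fun j _ => by cases σ j <;> simp
    _ ≤ ∑ _j : Fin N, C := sum_le_sum fun j _ => hx j
    _ = N * C := by simp

lemma bddAbove_signedSum (σ : Fin N → Bool) {v : I → Fin N → ℝ} {C : ℝ}
    (hv : ∀ i j, |v i j| ≤ C) : BddAbove (Set.range fun i => signedSum σ (v i)) :=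
  ⟨N * C, Set.forall_mem_range.2 fun i => (le_abs_self _).trans (abs_signedSum_le σ (hv i))⟩

lemma signedSum_add (σ : Fin N → Bool) (x y : Fin N → ℝ) :
    signedSum σ (x + y) = signedSum σ x + signedSum σ y := by
  simp only [signedSum, Pi.add_apply, mul_add, sum_add_distrib]

lemma signedSum_smul (σ : Fin N → Bool) (c : ℝ) (x : Fin N → ℝ) :
    signedSum σ (c • x) = c * signedSum σ x := by
  simp only [signedSum, Pi.smul_apply, smul_eq_mul, mul_sum]
  exact sum_congr rfl fun j _ => by ring

lemma signedSum_not (σ : Fin N → Bool) (x : Fin N → ℝ) :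
    signedSum (fun j => !σ j) x = signedSum σ (-x) :=
  sum_congr rfl fun j _ => by cases h : σ j <;> simp [h]

lemma signedSum_cons (b : Bool) (τ : Fin N → Bool) (x : Fin (N + 1) → ℝ) :
    signedSum (Fin.cons b τ : Fin (N + 1) → Bool) x
      = (if b then (1 : ℝ) else -1) * x 0 + signedSum τ (Fin.tail x) := by
  simp only [signedSum, Fin.sum_univ_succ, Fin.cons_zero, Fin.cons_succ, Fin.tail]

lemma sum_iSup_add_signedSum_succ (a : I → ℝ) (x : I → Fin (N + 1) → ℝ) :
    ∑ σ : Fin (N + 1) → Bool, ⨆ i, (a i + signedSum σ (x i))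
      = (∑ τ : Fin N → Bool, ⨆ i, (a i + x i 0 + signedSum τ (Fin.tail (x i))))
        + ∑ τ : Fin N → Bool, ⨆ i, (a i - x i 0 + signedSum τ (Fin.tail (x i))) := by
  rw [← (Fin.consEquiv fun _ => Bool).sum_comp, Fintype.sum_prod_type, Fintype.sum_bool]
  congr 1 <;> refine sum_congr rfl fun τ _ => iSup_congr fun i => ?_ <;>
    simp only [Fin.consEquiv, Equiv.coe_fn_mk, signedSum_cons] <;> simp <;> ring

lemma rademacherSum_neg (v : I → Fin N → ℝ) : rademacherSum (-v) = rademacherSum v := by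
  refine Fintype.sum_equiv ⟨fun σ j => !σ j, fun σ j => !σ j, fun σ => by simp, fun σ => by simp⟩
    _ _ fun σ => ?_
  simp only [Equiv.coe_fn_mk, signedSum_not, Pi.neg_apply]

lemma rademacherSum_smul {c : ℝ} (hc : 0 ≤ c) (v : I → Fin N → ℝ) :
    rademacherSum (c • v) = c * rademacherSum v := by
  simp only [rademacherSum, Pi.smul_apply, signedSum_smul, mul_sum, Real.mul_iSup_of_nonneg hc]

lemma lipschitzWith_one_abs : LipschitzWith 1 (abs : ℝ → ℝ) :=
  LipschitzWith.of_dist_le_mul fun x y => by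
    simpa [Real.dist_eq] using abs_abs_sub_abs_le_abs_sub x y

variable [Nonempty I]

lemma iSup_add_comp_add_iSup_sub_comp_le {φ : ℝ → ℝ} (hφ : LipschitzWith 1 φ) {b t : I → ℝ}
    {B C : ℝ} (hb : ∀ i, b i ≤ B) (ht : ∀ i, |t i| ≤ C) :
    (⨆ i, (b i + φ (t i))) + ⨆ i, (b i - φ (t i))
      ≤ (⨆ i, (b i + t i)) + ⨆ i, (b i - t i) := by
  have hplus : BddAbove (Set.range fun i => b i + t i) :=
    ⟨B + C, Set.forall_mem_range.2 fun i => add_le_add (hb i) (abs_le.1 (ht i)).2⟩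
  have hminus : BddAbove (Set.range fun i => b i - t i) :=
    ⟨B + C, Set.forall_mem_range.2 fun i => by linarith [hb i, (abs_le.1 (ht i)).1]⟩
  refine ciSup_add_ciSup_le fun i i' => ?_
  have hlip : φ (t i) - φ (t i') ≤ |t i - t i'| := by
    simpa [Real.dist_eq] using (le_abs_self _).trans (hφ.dist_le_mul (t i) (t i'))
  rcases le_total (t i') (t i) with h | h
  · have := add_le_add (le_ciSup hplus i) (le_ciSup hminus i')
    rw [abs_of_nonneg (sub_nonneg.2 h)] at hlip
    linarith
  · have := add_le_add (le_ciSup hplus i') (le_ciSup hminus i)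
    rw [abs_of_nonpos (sub_nonpos.2 h)] at hlip
    linarith

lemma abs_apply_le_of_lipschitzWith_one {φ : ℝ → ℝ} (hφ : LipschitzWith 1 φ) {x C : ℝ}
    (hx : |x| ≤ C) : |φ x| ≤ |φ 0| + C := by
  have := hφ.dist_le_mul x 0
  simp only [Real.dist_eq, NNReal.coe_one, one_mul, sub_zero] at this
  linarith [abs_sub_abs_le_abs_sub (φ x) (φ 0)]

/-- The offset `a` makes the contraction principle strong enough for induction on `N`. -/
lemma sum_iSup_add_signedSum_comp_le {φ : ℝ → ℝ} (hφ : LipschitzWith 1 φ) :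
    ∀ {N : ℕ} {a : I → ℝ} {A : ℝ}, (∀ i, a i ≤ A) → ∀ {v : I → Fin N → ℝ} {C : ℝ},
      (∀ i j, |v i j| ≤ C) →
      ∑ σ : Fin N → Bool, ⨆ i, (a i + signedSum σ (φ ∘ v i))
        ≤ ∑ σ : Fin N → Bool, ⨆ i, (a i + signedSum σ (v i))
  | 0, _, _, _, _, _, _ => le_of_eq (by simp [signedSum])
  | N + 1, a, A, ha, v, C, hv => by
    have hφv := fun i => abs_le.1 (abs_apply_le_of_lipschitzWith_one hφ (hv i 0))
    have hv' : ∀ i j, |Fin.tail (v i) j| ≤ C := fun i j => hv i j.succ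
    rw [sum_iSup_add_signedSum_succ, sum_iSup_add_signedSum_succ]
    calc _ ≤ (∑ τ : Fin N → Bool, ⨆ i, (a i + φ (v i 0) + signedSum τ (Fin.tail (v i))))
            + ∑ τ : Fin N → Bool, ⨆ i, (a i - φ (v i 0) + signedSum τ (Fin.tail (v i))) :=
          add_le_add
            (sum_iSup_add_signedSum_comp_le hφ (fun i => add_le_add (ha i) (hφv i).2) hv')
            (sum_iSup_add_signedSum_comp_le hφ (A := A + (|φ 0| + C))
              (fun i => by linarith [ha i, (hφv i).1]) hv')
      _ ≤ _ := by
        rw [← sum_add_distrib, ← sum_add_distrib]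
        refine sum_le_sum fun τ _ => ?_
        have hb i : a i + signedSum τ (Fin.tail (v i)) ≤ A + N * C :=
          add_le_add (ha i) ((le_abs_self _).trans (abs_signedSum_le τ (hv' i)))
        simpa only [add_right_comm, sub_add_eq_add_sub] using
          iSup_add_comp_add_iSup_sub_comp_le hφ hb (fun i => hv i 0)

lemma rademacherSum_comp_le {φ : ℝ → ℝ} (hφ : LipschitzWith 1 φ) {v : I → Fin N → ℝ} {C : ℝ}
    (hv : ∀ i j, |v i j| ≤ C) : rademacherSum (fun i => φ ∘ v i) ≤ rademacherSum v := by
  simpa only [rademacherSum, zero_add] using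
    sum_iSup_add_signedSum_comp_le hφ (a := fun _ => 0) (fun _ => le_rfl) hv

lemma rademacherSum_add_le {v w : I → Fin N → ℝ} {C D : ℝ} (hv : ∀ i j, |v i j| ≤ C)
    (hw : ∀ i j, |w i j| ≤ D) : rademacherSum (v + w) ≤ rademacherSum v + rademacherSum w := by
  rw [rademacherSum, rademacherSum, rademacherSum, ← sum_add_distrib]
  refine sum_le_sum fun σ _ => ciSup_le fun i => ?_
  rw [Pi.add_apply, signedSum_add]
  exact add_le_add (le_ciSup (bddAbove_signedSum σ hv) i) (le_ciSup (bddAbove_signedSum σ hw) i)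

lemma rademacherSum_sup_le {v w : I → Fin N → ℝ} {C D : ℝ} (hv : ∀ i j, |v i j| ≤ C)
    (hw : ∀ i j, |w i j| ≤ D) : rademacherSum (v ⊔ w) ≤ rademacherSum v + rademacherSum w := by
  have hnegw : ∀ i j, |(-w) i j| ≤ D := fun i j => by simpa using hw i j
  have hvw : ∀ i j, |(v + w) i j| ≤ C + D := fun i j =>
    (abs_add_le _ _).trans (add_le_add (hv i j) (hw i j))
  have hdiff : ∀ i j, |(v - w) i j| ≤ C + D := fun i j =>
    (abs_sub _ _).trans (add_le_add (hv i j) (hw i j))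
  have hmax : (2 : ℝ) • (v ⊔ w) = (v + w) + fun i => abs ∘ (v - w) i := by
    ext i j
    simp only [Pi.smul_apply, Pi.sup_apply, Pi.add_apply, Function.comp_apply, Pi.sub_apply,
      smul_eq_mul]
    rcases le_total (v i j) (w i j) with h | h
    · rw [sup_eq_right.2 h, abs_of_nonpos (sub_nonpos.2 h)]; ring
    · rw [sup_eq_left.2 h, abs_of_nonneg (sub_nonneg.2 h)]; ring
  have habs : rademacherSum (fun i => abs ∘ (v - w) i) ≤ rademacherSum v + rademacherSum w :=
    calc _ ≤ rademacherSum (v - w) := rademacherSum_comp_le lipschitzWith_one_abs hdiff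
      _ ≤ rademacherSum v + rademacherSum (-w) :=
          sub_eq_add_neg v w ▸ rademacherSum_add_le hv hnegw
      _ = rademacherSum v + rademacherSum w := by rw [rademacherSum_neg]
  have hmax_le : 2 * rademacherSum (v ⊔ w)
      ≤ rademacherSum (v + w) + rademacherSum (fun i => abs ∘ (v - w) i) := by
    rw [← rademacherSum_smul zero_le_two, hmax]
    exact rademacherSum_add_le hvw fun i j => (abs_abs ((v - w) i j)).le.trans (hdiff i j)
  linarith [rademacherSum_add_le hv hw]

end Rademacher

lemma empRad_eq {Ω I : Type*} (N : ℕ) (δ : Fin N → Ω) (h : I → Ω → ℝ) :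
    empRad N δ h = 1 / N * rademacherSum (fun i j => h i (δ j)) / 2 ^ N := by
  rw [empRad, rademacherSum, mul_sum]
  congr 1
  exact sum_congr rfl fun σ _ => (Real.mul_iSup_of_nonneg (by positivity) _).symm

theorem stmt_11 {Ω I : Type*} [Nonempty I] (N : ℕ) (δ : Fin N → Ω)
    (f g : I → Ω → ℝ)
    (hf : ∀ i ω, f i ω ∈ Set.Icc (0 : ℝ) 1) (hg : ∀ i ω, g i ω ∈ Set.Icc (0 : ℝ) 1) :
    empRad N δ (fun i ω => max (f i ω) (g i ω)) ≤ empRad N δ f + empRad N δ g := by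
  have abs_le_one {x : ℝ} (hx : x ∈ Set.Icc (0 : ℝ) 1) : |x| ≤ 1 :=
    abs_le.2 ⟨by linarith [hx.1], hx.2⟩
  rw [empRad_eq, empRad_eq, empRad_eq, ← add_div, ← mul_add]
  gcongr
  exact rademacherSum_sup_le (fun i j => abs_le_one (hf i (δ j)))
    (fun i j => abs_le_one (hg i (δ j)))
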